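/- arXiv:2105.14939 — 3 statements merged into one kernel-verified Lean document; each statement's English description precedes it below -/
import Mathlib

section
/- Let q be a prime power, F a finite field with q elements, K an extension field of F with [K:F] = 2n+1 (n ≥ 1), and let ω ∈ K \ {0}. In the projectivization ℙ(K × K) of the F-vector space K × K, the set 𝒱_ω = { [ (x^2, ω·x^{q+1}) ] : x ∈ K \ {0} } of projective points represented by the vectors (x^2, ω x^{q+1}) has cardinality (q^{2n+1} - 1)/(q - 1). -/
open scoped LinearAlgebra.Projectivization

/-!
If `a • (y², ω y^(q+1)) = (x², ω x^(q+1))` with `a ∈ Fˣ`, then `t = y / x` satisfies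
`t² = t^(q+1) = a⁻¹`, so `t^q = t` and `t ∈ Fˣ`; conversely, scaling `x` by `c ∈ Fˣ` scales the
vector by `c²` because `c^q = c`. Hence `x ↦ [(x², ω x^(q+1))]` identifies `Kˣ ⧸ Fˣ` with `𝒱_ω`,
which therefore has `(q^(2n+1) - 1) / (q - 1)` points.
-/

open Polynomial in
theorem FiniteField.mem_range_algebraMap_of_pow_card_eq_self {F K : Type*} [Field F] [Fintype F]
    [Field K] [Algebra F K] {t : K} (ht : t ^ Fintype.card F = t) :
    t ∈ (algebraMap F K).range := by
  have hq : 1 < Fintype.card F := Fintype.one_lt_card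
  -- every element of `F` is a root of `X ^ q - X`, so it splits over `F`
  have hsplits : (X ^ Fintype.card F - X : F[X]).Splits := by
    rw [splits_iff_card_roots, roots_X_pow_card_sub_X, X_pow_card_sub_X_natDegree_eq F hq]
    rfl
  exact hsplits.mem_range_of_isRoot (X_pow_card_sub_X_ne_zero F hq) (by simp [ht])

theorem FiniteField.mem_range_unitsMap_algebraMap_of_pow_card_eq_self {F K : Type*} [Field F]
    [Fintype F] [Field K] [Algebra F K] {t : Kˣ} (ht : t ^ Fintype.card F = t) :
    t ∈ (Units.map (algebraMap F K).toMonoidHom).range := by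
  obtain ⟨c, hc⟩ := mem_range_algebraMap_of_pow_card_eq_self (F := F) (congrArg Units.val ht)
  have hc0 : c ≠ 0 := by
    rintro rfl
    exact t.ne_zero (by rw [← hc, map_zero])
  exact ⟨Units.mk0 c hc0, Units.ext hc⟩

theorem Subgroup.ncard_range_eq_card_quotient {G α : Type*} [Group G] (H : Subgroup G)
    (f : G → α) (hf : ∀ x y, f x = f y ↔ x⁻¹ * y ∈ H) :
    (Set.range f).ncard = Nat.card (G ⧸ H) := by
  let g : G ⧸ H → α := Quotient.lift f fun x y hxy => (hf x y).2 (QuotientGroup.leftRel_apply.1 hxy)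
  have hg : Function.Injective g := by
    rintro ⟨x⟩ ⟨y⟩ hxy
    exact QuotientGroup.eq.2 ((hf x y).1 hxy)
  rw [← Set.ncard_range_of_injective hg]
  exact congrArg Set.ncard (Set.range_quotient_lift (s := QuotientGroup.leftRel H) _).symm

theorem pow_eq_self_of_sq_eq_pow_succ {G : Type*} [Group G] {t : G} {n : ℕ}
    (h : t ^ 2 = t ^ (n + 1)) : t ^ n = t :=
  mul_right_cancel (b := t) (by rw [← pow_succ, ← h, sq])

section Veronese

variable (F : Type*) {K : Type*} [Fintype F] [Field K]

def veroneseVector (ω x : K) : K × K := (x ^ 2, ω * x ^ (Fintype.card F + 1))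

variable {F}

theorem veroneseVector_ne_zero (ω : K) {x : K} (hx : x ≠ 0) : veroneseVector F ω x ≠ 0 :=
  fun h => hx (pow_eq_zero_iff two_ne_zero |>.1 (congrArg Prod.fst h))

variable [Field F] [Algebra F K]

theorem veroneseVector_algebraMap_mul (ω x : K) (c : F) :
    veroneseVector F ω (algebraMap F K c * x) = c ^ 2 • veroneseVector F ω x := by
  have hc : algebraMap F K c ^ Fintype.card F = algebraMap F K c := by
    rw [← map_pow, FiniteField.pow_card]
  ext <;> simp only [veroneseVector, Prod.smul_fst, Prod.smul_snd] <;>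
    simp only [Algebra.smul_def, map_pow]
  · ring
  · linear_combination (ω * algebraMap F K c * x ^ (Fintype.card F + 1)) * hc

variable (F)

def veroneseMap (ω : K) (x : Kˣ) : ℙ F (K × K) :=
  Projectivization.mk F (veroneseVector F ω x) (veroneseVector_ne_zero ω x.ne_zero)

variable {F}

theorem veroneseMap_eq_iff {ω : K} (hω : ω ≠ 0) (x y : Kˣ) :
    veroneseMap F ω x = veroneseMap F ω y ↔
      x⁻¹ * y ∈ (Units.map (algebraMap F K).toMonoidHom).range := by
  constructor
  · intro hxy
    obtain ⟨a, ha⟩ := (Projectivization.mk_eq_mk_iff' _ _ _ _ _).1 hxy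
    have h₁ : algebraMap F K a * (y : K) ^ 2 = (x : K) ^ 2 :=
      (Algebra.smul_def a _).symm.trans (congrArg Prod.fst ha)
    have h₂ : algebraMap F K a * (y : K) ^ (Fintype.card F + 1) = (x : K) ^ (Fintype.card F + 1) :=
      mul_left_cancel₀ hω <| by
        rw [mul_left_comm, ← Algebra.smul_def]
        exact congrArg Prod.snd ha
    apply FiniteField.mem_range_unitsMap_algebraMap_of_pow_card_eq_self
    apply pow_eq_self_of_sq_eq_pow_succ
    ext
    simp only [Units.val_pow_eq_pow_val, Units.val_mul, Units.val_inv_eq_inv_val, mul_pow, inv_pow,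
      ← h₁, ← h₂]
    field_simp
  · rintro ⟨c, hc⟩
    have hy : (y : K) = algebraMap F K c * x := by
      rw [inv_mul_eq_iff_eq_mul.1 hc.symm, Units.val_mul, mul_comm]
      rfl
    refine ((Projectivization.mk_eq_mk_iff' _ _ _ _ _).2 ⟨(c : F) ^ 2, ?_⟩).symm
    rw [hy, veroneseVector_algebraMap_mul]

end Veronese

/-- Lemma: `|𝒱_ω| = (q^{2n+1} - 1)/(q - 1)`. -/
theorem ncard_veronese_pointset
    (q n : ℕ) (F K : Type*) [Field F] [Field K]
    [Fintype F] [Fintype K] [Algebra F K]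
    (hF : Fintype.card F = q) (hK : Module.finrank F K = 2 * n + 1)
    (ω : K) (hω : ω ≠ 0) :
    { P : ℙ F (K × K) | ∃ x : K, ∃ hx : x ≠ 0,
        P = Projectivization.mk F (x ^ 2, ω * x ^ (q + 1))
          (by
            intro h0
            exact hx (pow_eq_zero_iff (two_ne_zero)
              |>.mp (congrArg Prod.fst h0)) ) }.ncard
      = (q ^ (2 * n + 1) - 1) / (q - 1) := by
  subst hF
  let H := (Units.map (algebraMap F K).toMonoidHom).range
  have hcardH : Nat.card H = Fintype.card F - 1 := by
    rw [← Nat.card_congr (MonoidHom.ofInjective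
        (Units.map_injective (algebraMap F K).injective)).toEquiv,
      Nat.card_units, Nat.card_eq_fintype_card]
  have hcardK : Nat.card Kˣ = Fintype.card F ^ (2 * n + 1) - 1 := by
    rw [Nat.card_units, Nat.card_eq_fintype_card, Module.card_eq_pow_finrank (K := F), hK]
  convert_to (Set.range (veroneseMap F ω)).ncard = _ using 2
  · ext P
    constructor
    · rintro ⟨x, hx, rfl⟩
      exact ⟨Units.mk0 x hx, rfl⟩
    · rintro ⟨x, rfl⟩
      exact ⟨x, x.ne_zero, rfl⟩
  rw [Subgroup.ncard_range_eq_card_quotient H _ (veroneseMap_eq_iff hω), ← hcardK, ← hcardH,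
    Subgroup.card_eq_card_quotient_mul_card_subgroup H, Nat.mul_div_cancel _ Nat.card_pos]
end

section
/- Let q > 2 be an even prime power, F a finite field with q elements, K an extension field of F with [K:F] = 3, and let α ∈ F with α ≠ 0 and α ≠ 1 (identified with its image in K). For a_0, a_1 ∈ K let M(a_0, a_1) be the 3×3 symmetric matrix over K given by M(a_0,a_1) = [[a_0, a_1, a_1^{q^2}], [a_1, a_0^q, a_1^q], [a_1^{q^2}, a_1^q, a_0^{q^2}]]. If the matrix M(a_0, a_1) has rank at most 2 and the matrix M(a_0, α^{-1}·a_1) has rank at most 2, then a_0 = 0. -/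
/-!
In characteristic 2 the determinant of the symmetric matrix with diagonal `a, d, f` and
off-diagonal entries `b, c, e` is `a d f + (a e² + d c² + f b²)`. Scaling the off-diagonal
entries by `β` multiplies the second summand by `β²`, so
`det M_β = β² det M + (1 - β)² a d f`. Since `β = α⁻¹ ∈ F` is fixed by the Frobenius
`x ↦ x^q`, the matrix `M(a₀, α⁻¹ a₁)` is `M(a₀, a₁)` with scaled off-diagonal entries; both
determinants vanish, hence so does the norm `a₀ a₀^q a₀^{q²}`, and `a₀ = 0`.
-/

theorem Matrix.det_eq_zero_of_rank_lt {R n : Type*} [CommRing R] [IsDomain R] [Fintype n]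
    [DecidableEq n] {A : Matrix n n R} (h : A.rank < Fintype.card n) : A.det = 0 := by
  by_contra hA
  exact h.ne (rank_of_det_ne_zero hA)

theorem FiniteField.charP_two_of_even_card {F : Type*} [Field F] [Fintype F]
    (h : Even (Fintype.card F)) : CharP F 2 :=
  ringChar.of_eq (even_card_iff_char_two.mpr (Nat.even_iff.mp h))

theorem CharTwo.det_fin_three_smul_offDiag {R : Type*} [CommRing R] [CharP R 2]
    (β a b c d e f : R) :
    !![a, β * b, β * c; β * b, d, β * e; β * c, β * e, f].det =
      β ^ 2 * !![a, b, c; b, d, e; c, e, f].det + (1 - β) ^ 2 * (a * d * f) := by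
  simp only [Matrix.det_fin_three, Matrix.of_apply, Matrix.cons_val', Matrix.cons_val_zero,
    Matrix.cons_val_one, Matrix.cons_val_two, Matrix.empty_val', Matrix.cons_val_fin_one,
    Matrix.head_cons, Matrix.head_fin_const, Matrix.tail_cons]
  linear_combination
    ((β ^ 3 - β ^ 2) * b * c * e + (β - β ^ 2) * a * d * f) * CharTwo.two_eq_zero (R := R)

theorem chordal_varieties_meet_in_nuclear_plane_even_general
    (q : ℕ) (F K : Type*) [Field F] [Field K]
    [Fintype F] [Algebra F K]
    (hF : Fintype.card F = q) (heven : Even q)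
    (α : F) (hα1 : α ≠ 1)
    (a0 a1 : K)
    (h1 : (!![a0, a1, a1 ^ q ^ 2;
              a1, a0 ^ q, a1 ^ q;
              a1 ^ q ^ 2, a1 ^ q, a0 ^ q ^ 2] : Matrix (Fin 3) (Fin 3) K).rank ≤ 2)
    (h2 : (!![a0, (algebraMap F K α)⁻¹ * a1, ((algebraMap F K α)⁻¹ * a1) ^ q ^ 2;
              (algebraMap F K α)⁻¹ * a1, a0 ^ q, ((algebraMap F K α)⁻¹ * a1) ^ q;
              ((algebraMap F K α)⁻¹ * a1) ^ q ^ 2, ((algebraMap F K α)⁻¹ * a1) ^ q,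
                a0 ^ q ^ 2] : Matrix (Fin 3) (Fin 3) K).rank ≤ 2) :
    a0 = 0 := by
  have := FiniteField.charP_two_of_even_card (hF ▸ heven : Even (Fintype.card F))
  have : CharP K 2 := charP_of_injective_algebraMap (algebraMap F K).injective 2
  set β : K := (algebraMap F K α)⁻¹
  have hβq : β ^ q = β := by
    simp only [β, ← map_inv₀, ← map_pow, ← hF, FiniteField.pow_card]
  have hβq2 : β ^ q ^ 2 = β := by rw [pow_two, pow_mul, hβq, hβq]
  have hβ1 : 1 - β ≠ 0 := by
    rw [sub_ne_zero, ne_comm, Ne, inv_eq_one, map_eq_one_iff _ (algebraMap F K).injective]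
    exact hα1
  have hdet1 := Matrix.det_eq_zero_of_rank_lt (h1.trans_lt (by simp))
  have hdet2 := Matrix.det_eq_zero_of_rank_lt (h2.trans_lt (by simp))
  rw [mul_pow, mul_pow, hβq, hβq2, CharTwo.det_fin_three_smul_offDiag, hdet1] at hdet2
  have hnorm : a0 * a0 ^ q * a0 ^ q ^ 2 = 0 := by
    simpa [hβ1] using hdet2
  exact (pow_eq_zero_iff (n := 1 + q + q ^ 2) (by positivity)).mp
    (by rwa [pow_add, pow_add, pow_one])

/-- Theorem: for `q > 2` even and `α ∈ F \ {0, 1}`, the chordal varieties `𝒮₁`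
and `𝒮_α` meet only in the nuclear plane: if both `M(a₀, a₁)` and
`M(a₀, α⁻¹ a₁)` have rank at most `2`, then `a₀ = 0`. -/
theorem chordal_varieties_meet_in_nuclear_plane_even
    (q : ℕ) (F K : Type*) [Field F] [Field K]
    [Fintype F] [Fintype K] [Algebra F K]
    (hF : Fintype.card F = q) (heven : Even q) (hq2 : 2 < q)
    (hK : Module.finrank F K = 3)
    (α : F) (hα0 : α ≠ 0) (hα1 : α ≠ 1)
    (a0 a1 : K)
    (h1 : (!![a0, a1, a1 ^ q ^ 2;
              a1, a0 ^ q, a1 ^ q;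
              a1 ^ q ^ 2, a1 ^ q, a0 ^ q ^ 2] : Matrix (Fin 3) (Fin 3) K).rank ≤ 2)
    (h2 : (!![a0, (algebraMap F K α)⁻¹ * a1, ((algebraMap F K α)⁻¹ * a1) ^ q ^ 2;
              (algebraMap F K α)⁻¹ * a1, a0 ^ q, ((algebraMap F K α)⁻¹ * a1) ^ q;
              ((algebraMap F K α)⁻¹ * a1) ^ q ^ 2, ((algebraMap F K α)⁻¹ * a1) ^ q,
                a0 ^ q ^ 2] : Matrix (Fin 3) (Fin 3) K).rank ≤ 2) :
    a0 = 0 :=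
  chordal_varieties_meet_in_nuclear_plane_even_general q F K hF heven α hα1 a0 a1 h1 h2
end

section
/- Let q be an odd prime power, F a finite field with q elements, and K an extension field of F with [K:F] = 2n+1 (n ≥ 1). Let ω ∈ K \ {0, 1, -1} be such that ω^2 - 1 is a nonzero square in K. Then there exists y ∈ K \ {0} such that y^{q^2} + (ω^q - ω·(ω^2-1)^{(q-1)/2})·y^q - (ω^2-1)^{(q-1)/2}·y = 0 and y^2 + y^{2q} + 2·ω·y^{q+1} ≠ 0. -/
/-!
Let `σ` be the `q`-Frobenius of `K` and `A = [[-ω, s], [-s, ω]]`, where `s² = ω² - 1`. It suffices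
to find `(y, z) ≠ 0` with `σ(y, z) = A (y, z)`: eliminating `z` gives `F₂(y) = 0`, and
`y² + y^{2q} + 2ω y^{q+1} = s² (z - y)(z + y)`, where `σ(z - y) = (ω - s)(z + y)` and
`σ(z + y) = (ω + s)(z - y)` with `(ω - s)(ω + s) = 1`; so if one factor vanishes, both do, and
then `y = 0`.

Since `A² = 1`, such a vector is a fixed point of `v ↦ A σ(v)`, and we obtain one by descent. The
matrix `A` is a reflection of the hyperbolic form `x² - y²`, hence so is the twisted product
`N = A σ(A) ⋯ σ^{m-1}(A)`, as `det N = (-1)^m = -1` for the odd degree `m = [K : F]`; thus `N`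
fixes some `v ≠ 0`. For every `a`, the twisted trace `∑_{k < m} (A σ)^k (a v)` is then fixed, and
by Dedekind's independence of `1, σ, …, σ^{m-1}` it is nonzero for some `a`.
-/

open Matrix Finset

namespace Matrix

variable {ι R S : Type*} [Fintype ι] [DecidableEq ι] [CommRing R] [CommRing S]

def isometrySubmonoid (η : Matrix ι ι R) : Submonoid (Matrix ι ι R) where
  carrier := {M | Mᵀ * η * M = η}
  mul_mem' {M N} hM hN := by
    simp only [Set.mem_ofPred_eq, transpose_mul] at *
    calc Nᵀ * Mᵀ * η * (M * N) = Nᵀ * (Mᵀ * η * M) * N := by simp only [Matrix.mul_assoc]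
      _ = η := by rw [hM, hN]
  one_mem' := by simp

theorem mem_isometrySubmonoid {η M : Matrix ι ι R} :
    M ∈ isometrySubmonoid η ↔ Mᵀ * η * M = η := Iff.rfl

theorem map_mem_isometrySubmonoid (f : R →+* S) {η M : Matrix ι ι R}
    (hM : M ∈ isometrySubmonoid η) : M.map f ∈ isometrySubmonoid (η.map f) := by
  rw [mem_isometrySubmonoid] at *
  rw [← transpose_map, ← Matrix.map_mul, ← Matrix.map_mul, hM]

/- `M⁻¹ = -adj M` and `M⁻¹ = η Mᵀ η` force `M = [[a, b], [-b, -a]]`; the combination below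
extracts `tr M = 0` from these relations. -/
theorem det_sub_one_eq_zero_of_mem_isometrySubmonoid {M : Matrix (Fin 2) (Fin 2) R}
    (hM : M ∈ isometrySubmonoid !![1, 0; 0, -1]) (hdet : M.det = -1) : (M - 1).det = 0 := by
  have hη := mem_isometrySubmonoid.mp hM
  have h00 : M 0 0 * M 0 0 - M 1 0 * M 1 0 = 1 := by
    simpa [mul_apply, Fin.sum_univ_two, sub_eq_add_neg] using congrFun₂ hη 0 0
  have h01 : M 0 0 * M 0 1 - M 1 0 * M 1 1 = 0 := by
    simpa [mul_apply, Fin.sum_univ_two, sub_eq_add_neg] using congrFun₂ hη 0 1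
  rw [det_fin_two] at hdet
  rw [det_fin_two]
  simp only [sub_apply, one_apply_eq, one_apply_ne, ne_eq, zero_ne_one, one_ne_zero,
    not_false_eq_true, sub_zero]
  linear_combination M 1 1 * h00 - M 1 0 * h01 + (1 - M 0 0) * hdet

end Matrix

section Twisted

variable {F L ι : Type*} [CommSemiring F] [Field L] [Algebra F L] [Fintype ι]

theorem exists_sum_mul_pow_apply_ne_zero {σ : L →ₐ[F] L} (hσ : IsOfFinOrder σ) {c : ℕ → L}
    (hc : c 0 ≠ 0) : ∃ a, ∑ k ∈ range (orderOf σ), c k * (σ ^ k) a ≠ 0 := by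
  by_contra! h
  have hli : LinearIndependent L fun k : Fin (orderOf σ) => ⇑(σ ^ (k : ℕ)) :=
    (linearIndependent_monoidHom L L).comp (fun k : Fin _ => ((σ ^ (k : ℕ) : L →ₐ[F] L) : L →* L))
      fun j k hjk => Fin.ext <| pow_injOn_Iio_orderOf j.2 k.2 <|
        DFunLike.coe_injective (DFunLike.coe_fn_eq.mpr hjk :)
  refine hc (Fintype.linearIndependent_iff.mp hli (c ·) ?_ ⟨0, hσ.orderOf_pos⟩)
  ext a
  simp only [Finset.sum_apply, Pi.smul_apply, smul_eq_mul, Pi.zero_apply]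
  rw [Fin.sum_univ_eq_sum_range (fun k => c k * (σ ^ k) a)]
  exact h a

variable (σ : L →ₐ[F] L) (A : Matrix ι ι L)

def twistedMulVec : AddMonoid.End (ι → L) where
  toFun v := A *ᵥ (σ ∘ v)
  map_zero' := by ext; simp
  map_add' v w := by
    simp only [Function.comp_def, Pi.add_apply, map_add]
    exact mulVec_add _ _ _

theorem twistedMulVec_apply (v : ι → L) : twistedMulVec σ A v = A *ᵥ (σ ∘ v) := rfl

variable [DecidableEq ι]

def twistedProd : ℕ → Matrix ι ι L
  | 0 => 1
  | k + 1 => twistedProd k * A.map (σ ^ k)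

theorem twistedMulVec_pow_apply (k : ℕ) (v : ι → L) :
    (twistedMulVec σ A ^ k) v = twistedProd σ A k *ᵥ (⇑(σ ^ k) ∘ v) := by
  induction k generalizing v with
  | zero => rw [pow_zero, pow_zero, twistedProd, one_mulVec]; rfl
  | succ k ih =>
    rw [pow_succ, AddMonoid.End.coe_mul, Function.comp_apply, ih, twistedMulVec_apply,
      twistedProd, ← mulVec_mulVec]
    congr 1
    ext i
    simpa [Function.iterate_succ, Function.comp_assoc] using
      RingHom.map_mulVec (σ ^ k).toRingHom A (σ ∘ v) i

theorem twistedMulVec_pow_smul (k : ℕ) (a : L) (v : ι → L) :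
    (twistedMulVec σ A ^ k) (a • v) = (σ ^ k) a • (twistedMulVec σ A ^ k) v := by
  rw [twistedMulVec_pow_apply, twistedMulVec_pow_apply, ← mulVec_smul]
  congr 1
  ext i
  simp

theorem exists_ne_zero_twistedMulVec_eq_self (hσ : IsOfFinOrder σ) {v : ι → L} (hv0 : v ≠ 0)
    (hv : twistedProd σ A (orderOf σ) *ᵥ v = v) : ∃ w ≠ 0, twistedMulVec σ A w = w := by
  obtain ⟨i, hi⟩ := Function.ne_iff.mp hv0
  obtain ⟨a, ha⟩ := exists_sum_mul_pow_apply_ne_zero hσ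
    (c := fun k => (twistedMulVec σ A ^ k) v i) (by simpa using hi)
  have hperiod : (twistedMulVec σ A ^ orderOf σ) (a • v) = a • v := by
    rw [twistedMulVec_pow_apply, pow_orderOf_eq_one]
    exact (mulVec_smul _ a v).trans (congrArg _ hv)
  refine ⟨∑ k ∈ range (orderOf σ), (twistedMulVec σ A ^ k) (a • v), fun h => ha ?_, ?_⟩
  · have hi := congrFun h i
    simp only [Finset.sum_apply, twistedMulVec_pow_smul, Pi.smul_apply, smul_eq_mul,
      Pi.zero_apply] at hi
    simpa only [mul_comm] using hi
  · have hshift := sum_range_succ' (fun k => (twistedMulVec σ A ^ k) (a • v)) (orderOf σ)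
    rw [sum_range_succ, hperiod] at hshift
    simp only [pow_succ', AddMonoid.End.coe_mul, Function.comp_apply, pow_zero] at hshift
    rw [map_sum]
    simpa using hshift.symm

theorem twistedProd_mem_isometrySubmonoid {η : Matrix ι ι L}
    (hη : ∀ k : ℕ, η.map ⇑(σ ^ k) = η) (hA : A ∈ isometrySubmonoid η) (k : ℕ) :
    twistedProd σ A k ∈ isometrySubmonoid η := by
  induction k with
  | zero => exact Submonoid.one_mem _
  | succ k ih =>
    refine Submonoid.mul_mem _ ih ?_
    have hk := map_mem_isometrySubmonoid (σ ^ k).toRingHom hA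
    rwa [AlgHom.toRingHom_eq_coe, RingHom.coe_coe, hη] at hk

theorem det_twistedProd (hA : A.det = -1) (k : ℕ) : (twistedProd σ A k).det = (-1) ^ k := by
  induction k with
  | zero => simp [twistedProd]
  | succ k ih =>
    have hk := (RingHom.map_det (σ ^ k).toRingHom A).symm
    rw [hA, map_neg, map_one] at hk
    rw [twistedProd, det_mul, ih, pow_succ]
    exact congrArg _ hk

end Twisted

theorem exists_ne_zero_twistedProd_mulVec_eq_self {F L : Type*} [CommSemiring F] [Field L]
    [Algebra F L] (σ : L →ₐ[F] L) {A : Matrix (Fin 2) (Fin 2) L}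
    (hA : A ∈ isometrySubmonoid !![1, 0; 0, -1]) (hdet : A.det = -1) {k : ℕ} (hk : Odd k) :
    ∃ v ≠ 0, twistedProd σ A k *ᵥ v = v := by
  have hη (k : ℕ) : (!![1, 0; 0, -1] : Matrix (Fin 2) (Fin 2) L).map ⇑(σ ^ k) =
      !![1, 0; 0, -1] := by
    ext i j
    fin_cases i <;> fin_cases j <;> simp
  have hsing := det_sub_one_eq_zero_of_mem_isometrySubmonoid
    (twistedProd_mem_isometrySubmonoid σ A hη hA k)
    (by rw [det_twistedProd σ A hdet, hk.neg_one_pow])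
  obtain ⟨v, hv0, hv⟩ := exists_mulVec_eq_zero_iff.mpr hsing
  exact ⟨v, hv0, by rwa [sub_mulVec, one_mulVec, sub_eq_zero] at hv⟩

section FrobeniusPair

variable {K : Type*} [Field K] (σ : K →+* K) {ω s y z : K}

theorem frobenius_linearized_eq_zero {q : ℕ} (hq : q ≠ 0) (hσ : ⇑σ = (· ^ q))
    (hs : s ^ 2 = ω ^ 2 - 1) (hy : σ y = -ω * y + s * z) (hz : σ z = -s * y + ω * z) :
    y ^ q ^ 2 + (ω ^ q - ω * s ^ (q - 1)) * y ^ q - s ^ (q - 1) * y = 0 := by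
  have hyy := congrArg σ hy
  simp only [map_add, map_mul, map_neg] at hyy
  have hsq : s ^ q = s * s ^ (q - 1) := by
    rw [← pow_succ', Nat.sub_add_cancel (Nat.one_le_iff_ne_zero.mpr hq)]
  simp only [hσ] at hy hz hyy
  rw [hsq, hz] at hyy
  rw [sq, pow_mul]
  linear_combination hyy - ω * s ^ (q - 1) * hy - s ^ (q - 1) * y * hs

theorem sq_add_sq_add_two_mul_mul_ne_zero (h2 : (2 : K) ≠ 0) (hs0 : s ≠ 0)
    (hs : s ^ 2 = ω ^ 2 - 1) (hy : σ y = -ω * y + s * z) (hz : σ z = -s * y + ω * z)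
    (hy0 : y ≠ 0) : y ^ 2 + σ y ^ 2 + 2 * ω * (σ y * y) ≠ 0 := by
  have hunit : (ω - s) * (ω + s) = 1 := by linear_combination -hs
  have hminus : σ (z - y) = (ω - s) * (z + y) := by simp only [map_sub, hy, hz]; ring
  have hplus : σ (z + y) = (ω + s) * (z - y) := by simp only [map_add, hy, hz]; ring
  have hboth : (z - y) * (z + y) = 0 → z - y = 0 ∧ z + y = 0 := by
    intro h
    rcases mul_eq_zero.mp h with h | h
    · rw [h, map_zero] at hminus
      exact ⟨h, (mul_eq_zero.mp hminus.symm).resolve_left (left_ne_zero_of_mul_eq_one hunit)⟩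
    · rw [h, map_zero] at hplus
      exact ⟨(mul_eq_zero.mp hplus.symm).resolve_left (right_ne_zero_of_mul_eq_one hunit), h⟩
  intro h
  rw [hy] at h
  have hfac : s ^ 2 * ((z - y) * (z + y)) = 0 := by linear_combination h - y ^ 2 * hs
  obtain ⟨hm, hp⟩ := hboth ((mul_eq_zero.mp hfac).resolve_left (pow_ne_zero 2 hs0))
  exact hy0 ((mul_eq_zero.mp (by linear_combination hp - hm : 2 * y = 0)).resolve_left h2)

end FrobeniusPair

open FiniteField Module

theorem exists_frobeniusAlgHom_eq {F K : Type*} [Field F] [Fintype F] [Field K] [Finite K]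
    [Algebra F K] (hK : Odd (finrank F K)) {ω s : K} (hs : s ^ 2 = ω ^ 2 - 1) :
    ∃ y z : K, (y ≠ 0 ∨ z ≠ 0) ∧ frobeniusAlgHom F K y = -ω * y + s * z ∧
      frobeniusAlgHom F K z = -s * y + ω * z := by
  set σ := frobeniusAlgHom F K
  set A : Matrix (Fin 2) (Fin 2) K := !![-ω, s; -s, ω]
  have hA : A ∈ isometrySubmonoid !![1, 0; 0, -1] := by
    rw [mem_isometrySubmonoid]
    ext i j
    fin_cases i <;> fin_cases j <;> simp [A, mul_apply, Fin.sum_univ_two] <;>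
      first | ring1 | linear_combination hs | linear_combination -hs
  have hdet : A.det = -1 := by rw [det_fin_two_of]; linear_combination hs
  have hord : orderOf σ = finrank F K := orderOf_frobeniusAlgHom F K
  obtain ⟨v, hv0, hv⟩ := exists_ne_zero_twistedProd_mulVec_eq_self σ hA hdet (hord ▸ hK)
  obtain ⟨w, hw0, hw⟩ := exists_ne_zero_twistedMulVec_eq_self σ A
    (orderOf_pos_iff.mp (hord ▸ finrank_pos)) hv0 hv
  have h0 : -(ω * σ (w 0)) + s * σ (w 1) = w 0 := by
    simpa [twistedMulVec_apply, A, mulVec, dotProduct, Fin.sum_univ_two] using congrFun hw 0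
  have h1 : -(s * σ (w 0)) + ω * σ (w 1) = w 1 := by
    simpa [twistedMulVec_apply, A, mulVec, dotProduct, Fin.sum_univ_two] using congrFun hw 1
  refine ⟨w 0, w 1, ?_, ?_, ?_⟩
  · by_contra! h
    exact hw0 (funext fun i => by fin_cases i <;> simp [h])
  · linear_combination -ω * h0 + s * h1 + σ (w 0) * hs
  · linear_combination -s * h0 + ω * h1 + σ (w 1) * hs

theorem F2_has_good_nonzero_root_general
    (q n : ℕ) (F K : Type*) [Field F] [Field K]
    [Fintype F] [Fintype K] [Algebra F K]
    (hF : Fintype.card F = q) (hodd : Odd q)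
    (hK : Module.finrank F K = 2 * n + 1)
    (ω : K)
    (hsq : ∃ s : K, s ≠ 0 ∧ s ^ 2 = ω ^ 2 - 1) :
    ∃ y : K, y ≠ 0 ∧
      y ^ q ^ 2 + (ω ^ q - ω * (ω ^ 2 - 1) ^ ((q - 1) / 2)) * y ^ q -
        (ω ^ 2 - 1) ^ ((q - 1) / 2) * y = 0 ∧
      y ^ 2 + y ^ (2 * q) + 2 * ω * y ^ (q + 1) ≠ 0 := by
  obtain ⟨s, hs0, hs⟩ := hsq
  obtain ⟨y, z, hyz, hy, hz⟩ :=
    exists_frobeniusAlgHom_eq (F := F) (hK ▸ odd_two_mul_add_one n) hs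
  set σ : K →+* K := (frobeniusAlgHom F K).toRingHom
  have hσ : ⇑σ = (· ^ q) := hF ▸ coe_frobeniusAlgHom F K
  have hy0 : y ≠ 0 := by
    rintro rfl
    have hz0 : z = 0 := by simpa [hs0] using hy
    simp [hz0] at hyz
  have h2F : (2 : F) ≠ 0 := Ring.two_ne_zero fun h => by
    have hcard := even_card_iff_char_two.mp h
    rw [hF] at hcard
    exact Nat.not_even_iff_odd.mpr hodd (Nat.even_iff.mpr hcard)
  have h2 : (2 : K) ≠ 0 := by
    rw [← map_ofNat (algebraMap F K) 2]
    exact (map_ne_zero _).mpr h2F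
  refine ⟨y, hy0, ?_, ?_⟩
  · rw [← hs, ← pow_mul, Nat.two_mul_div_two_of_even (Nat.Odd.sub_odd hodd odd_one)]
    exact frobenius_linearized_eq_zero σ hodd.pos.ne' hσ hs hy hz
  · rw [mul_comm 2 q, pow_mul, pow_succ y q, show y ^ q = σ y by rw [hσ]]
    exact sq_add_sq_add_two_mul_mul_ne_zero σ h2 hs0 hs hy hz hy0

/-- For `q` odd, `ω ∉ {0, 1, -1}` with `ω² - 1` a nonzero square in `K`, the
linearized polynomial
`F₂(y) = y^{q²} + (ω^q - ω(ω²-1)^{(q-1)/2}) y^q - (ω²-1)^{(q-1)/2} y`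
has a nonzero root `y ∈ K` with moreover `y² + y^{2q} + 2ω y^{q+1} ≠ 0`. -/
theorem F2_has_good_nonzero_root
    (q n : ℕ) (hn : 1 ≤ n) (F K : Type*) [Field F] [Field K]
    [Fintype F] [Fintype K] [Algebra F K]
    (hF : Fintype.card F = q) (hodd : Odd q)
    (hK : Module.finrank F K = 2 * n + 1)
    (ω : K) (hω0 : ω ≠ 0) (hω1 : ω ≠ 1) (hω1' : ω ≠ -1)
    (hsq : ∃ s : K, s ≠ 0 ∧ s ^ 2 = ω ^ 2 - 1) :
    ∃ y : K, y ≠ 0 ∧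
      y ^ q ^ 2 + (ω ^ q - ω * (ω ^ 2 - 1) ^ ((q - 1) / 2)) * y ^ q -
        (ω ^ 2 - 1) ^ ((q - 1) / 2) * y = 0 ∧
      y ^ 2 + y ^ (2 * q) + 2 * ω * y ^ (q + 1) ≠ 0 :=
  F2_has_good_nonzero_root_general q n F K hF hodd hK ω hsq
end
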